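/- For all α₁, c, α₂ > 0, the correlation coefficient of the two coordinates under the McKay density equals √(α₁/(α₁ + α₂)); that is, the covariance of X and Y divided by the product of the standard deviations of X and Y equals √(α₁/(α₁ + α₂)), where X has density c^{α₁} x^{α₁-1} e^{-cx}/Γ(α₁) and Y has density c^{α₁+α₂} y^{α₁+α₂-1} e^{-cy}/Γ(α₁+α₂). In particular, it does not depend on c. -/

import Mathlib

/-- The McKay bivariate gamma density with parameters `α₁ c α₂`, on `0 < x < y`. -/
noncomputable def mckayPDF (α₁ c α₂ : ℝ) (x y : ℝ) : ℝ :=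
  c ^ (α₁ + α₂) * x ^ (α₁ - 1) * (y - x) ^ (α₂ - 1) * Real.exp (-(c * y)) /
    (Real.Gamma α₁ * Real.Gamma α₂)


/-- The gamma density with shape `α` and rate `c`. -/
noncomputable def gammaRatePDF (α c : ℝ) (x : ℝ) : ℝ :=
  c ^ α * x ^ (α - 1) * Real.exp (-(c * x)) / Real.Gamma α

/-!
Under the McKay density, `X` and `Y - X` are independent with gamma laws of shapes `α₁`
and `α₂` (the density factors after the shift `y = x + t`). Hence
`E[XY] = E[X²] + E[X] E[Y - X]`, so `Cov(X, Y) = Var X = α₁ / c²`, while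
`Var Y = (α₁ + α₂) / c²`; the rate `c` cancels.
-/

open MeasureTheory Set Real

section GammaMoments

variable {a c : ℝ}

lemma integrableOn_rpow_mul_gammaRatePDF {p : ℝ} (hap : 0 < a + p) (hc : 0 < c) :
    IntegrableOn (fun x ↦ x ^ p * gammaRatePDF a c x) (Ioi 0) := by
  have h : IntegrableOn (fun x ↦ c ^ a / Gamma a * (x ^ (a + p - 1) * exp (-c * x ^ (1 : ℝ))))
      (Ioi 0) :=
    (integrableOn_rpow_mul_exp_neg_mul_rpow (by linarith) one_pos hc).const_mul _
  refine h.congr_fun (fun x (hx : 0 < x) ↦ ?_) measurableSet_Ioi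
  dsimp only
  rw [rpow_one, neg_mul, show a + p - 1 = p + (a - 1) by ring, rpow_add hx, gammaRatePDF]
  ring

lemma integral_rpow_mul_gammaRatePDF {p : ℝ} (hap : 0 < a + p) (hc : 0 < c) :
    ∫ x in Ioi 0, x ^ p * gammaRatePDF a c x = Gamma (a + p) / (Gamma a * c ^ p) := by
  have h : ∀ x ∈ Ioi (0 : ℝ),
      x ^ p * gammaRatePDF a c x = c ^ a / Gamma a * (x ^ (a + p - 1) * exp (-(c * x))) := by
    intro x (hx : 0 < x)
    rw [show a + p - 1 = p + (a - 1) by ring, rpow_add hx, gammaRatePDF]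
    ring
  have hca : c ^ a ≠ 0 := (rpow_pos_of_pos hc a).ne'
  rw [setIntegral_congr_fun measurableSet_Ioi h, integral_const_mul,
    integral_rpow_mul_exp_neg_mul_Ioi hap hc, div_rpow zero_le_one hc.le, one_rpow, rpow_add hc]
  field_simp

lemma integrableOn_pow_mul_gammaRatePDF (ha : 0 < a) (hc : 0 < c) (n : ℕ) :
    IntegrableOn (fun x ↦ x ^ n * gammaRatePDF a c x) (Ioi 0) := by
  simpa only [rpow_natCast] using integrableOn_rpow_mul_gammaRatePDF (p := n) (by positivity) hc

lemma integral_pow_mul_gammaRatePDF (ha : 0 < a) (hc : 0 < c) (n : ℕ) :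
    ∫ x in Ioi 0, x ^ n * gammaRatePDF a c x = Gamma (a + n) / (Gamma a * c ^ n) := by
  simpa only [rpow_natCast] using integral_rpow_mul_gammaRatePDF (p := n) (by positivity) hc

lemma integrableOn_mul_gammaRatePDF (ha : 0 < a) (hc : 0 < c) :
    IntegrableOn (fun x ↦ x * gammaRatePDF a c x) (Ioi 0) := by
  simpa using integrableOn_pow_mul_gammaRatePDF ha hc 1

lemma integral_gammaRatePDF (ha : 0 < a) (hc : 0 < c) :
    ∫ x in Ioi 0, gammaRatePDF a c x = 1 := by
  simpa [(Gamma_pos_of_pos ha).ne'] using integral_pow_mul_gammaRatePDF ha hc 0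

lemma integral_mul_gammaRatePDF (ha : 0 < a) (hc : 0 < c) :
    ∫ x in Ioi 0, x * gammaRatePDF a c x = a / c := by
  simpa [Gamma_add_one ha.ne', mul_comm a, mul_div_mul_left _ _ (Gamma_pos_of_pos ha).ne']
    using integral_pow_mul_gammaRatePDF ha hc 1

lemma integral_sq_mul_gammaRatePDF (ha : 0 < a) (hc : 0 < c) :
    ∫ x in Ioi 0, x ^ 2 * gammaRatePDF a c x = a * (a + 1) / c ^ 2 := by
  rw [integral_pow_mul_gammaRatePDF ha hc 2, Nat.cast_ofNat, show a + 2 = a + 1 + 1 by ring,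
    Gamma_add_one (by positivity), Gamma_add_one ha.ne']
  field_simp [(Gamma_pos_of_pos ha).ne']

end GammaMoments

lemma setIntegral_Ioi_eq_integral_Ioi_zero_add {E : Type*} [NormedAddCommGroup E]
    [NormedSpace ℝ E] (f : ℝ → E) (x : ℝ) :
    ∫ y in Ioi x, f y = ∫ t in Ioi 0, f (x + t) := by
  rw [← (measurePreserving_add_left volume x).setIntegral_preimage_emb
    (MeasurableEquiv.addLeft x).measurableEmbedding f (Ioi x)]
  simp

section McKay

variable {α₁ c α₂ : ℝ}

lemma mckayPDF_add (hc : 0 < c) (x t : ℝ) :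
    mckayPDF α₁ c α₂ x (x + t) = gammaRatePDF α₁ c x * gammaRatePDF α₂ c t := by
  rw [mckayPDF, gammaRatePDF, gammaRatePDF, add_sub_cancel_left, rpow_add hc, mul_add, neg_add,
    exp_add]
  ring

lemma integral_Ioi_mul_mckayPDF (hc : 0 < c) (h₂ : 0 < α₂) (x : ℝ) :
    ∫ y in Ioi x, y * mckayPDF α₁ c α₂ x y = gammaRatePDF α₁ c x * (x + α₂ / c) := by
  have hf : IntegrableOn (gammaRatePDF α₂ c) (Ioi 0) := by
    simpa using integrableOn_pow_mul_gammaRatePDF h₂ hc 0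
  have h : ∀ t, (x + t) * mckayPDF α₁ c α₂ x (x + t) =
      gammaRatePDF α₁ c x * (x * gammaRatePDF α₂ c t + t * gammaRatePDF α₂ c t) := by
    intro t
    rw [mckayPDF_add hc]
    ring
  rw [setIntegral_Ioi_eq_integral_Ioi_zero_add, funext h, integral_const_mul,
    integral_add (hf.const_mul x) (integrableOn_mul_gammaRatePDF h₂ hc), integral_const_mul,
    integral_gammaRatePDF h₂ hc, integral_mul_gammaRatePDF h₂ hc, mul_one]

lemma integral_mul_mul_mckayPDF (h₁ : 0 < α₁) (hc : 0 < c) (h₂ : 0 < α₂) :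
    ∫ x in Ioi 0, ∫ y in Ioi x, x * y * mckayPDF α₁ c α₂ x y =
      α₁ * (α₁ + α₂ + 1) / c ^ 2 := by
  have inner : ∀ x, ∫ y in Ioi x, x * y * mckayPDF α₁ c α₂ x y =
      x ^ 2 * gammaRatePDF α₁ c x + α₂ / c * (x * gammaRatePDF α₁ c x) := by
    intro x
    simp_rw [mul_assoc x]
    rw [integral_const_mul, integral_Ioi_mul_mckayPDF hc h₂]
    ring
  rw [funext inner, integral_add (integrableOn_pow_mul_gammaRatePDF h₁ hc 2)
      ((integrableOn_mul_gammaRatePDF h₁ hc).const_mul _),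
    integral_const_mul, integral_sq_mul_gammaRatePDF h₁ hc, integral_mul_gammaRatePDF h₁ hc]
  field_simp
  ring

end McKay

lemma sqrt_gamma_variance {a c : ℝ} (hc : 0 < c) :
    √(a * (a + 1) / c ^ 2 - (a / c) ^ 2) = √a / c := by
  rw [show a * (a + 1) / c ^ 2 - (a / c) ^ 2 = a / c ^ 2 by field_simp; ring,
    sqrt_div' _ (sq_nonneg c), sqrt_sq hc.le]

theorem mckay_correlation (α₁ c α₂ : ℝ) (h₁ : 0 < α₁) (hc : 0 < c) (h₂ : 0 < α₂) :
    ((∫ x in Set.Ioi (0 : ℝ), ∫ y in Set.Ioi x, x * y * mckayPDF α₁ c α₂ x y) -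
        (∫ x in Set.Ioi (0 : ℝ), x * gammaRatePDF α₁ c x) *
          (∫ y in Set.Ioi (0 : ℝ), y * gammaRatePDF (α₁ + α₂) c y)) /
      (Real.sqrt ((∫ x in Set.Ioi (0 : ℝ), x ^ 2 * gammaRatePDF α₁ c x) -
          (∫ x in Set.Ioi (0 : ℝ), x * gammaRatePDF α₁ c x) ^ 2) *
        Real.sqrt ((∫ y in Set.Ioi (0 : ℝ), y ^ 2 * gammaRatePDF (α₁ + α₂) c y) -
          (∫ y in Set.Ioi (0 : ℝ), y * gammaRatePDF (α₁ + α₂) c y) ^ 2)) =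
      Real.sqrt (α₁ / (α₁ + α₂)) := by
  have hs : 0 < α₁ + α₂ := by linarith
  rw [integral_mul_mul_mckayPDF h₁ hc h₂, integral_mul_gammaRatePDF h₁ hc,
    integral_mul_gammaRatePDF hs hc, integral_sq_mul_gammaRatePDF h₁ hc,
    integral_sq_mul_gammaRatePDF hs hc, sqrt_gamma_variance hc, sqrt_gamma_variance hc,
    sqrt_div' _ hs.le]
  have hsqrt : 0 < √(α₁ + α₂) := sqrt_pos.mpr hs
  field_simp
  rw [sq_sqrt h₁.le]
  ring
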